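/- arXiv:1902.06962 — 3 statements merged into one kernel-verified Lean document; each statement's English description precedes it below -/
import Mathlib

section
/- For a function F : ℝ → ℝ, a point x ∈ ℝ, and a Borel measure μ on ℝ with distribution function F(x) = μ((−∞, x]), if μ is atomless then the pointwise Hölder exponent of F at x equals the lower local dimension liminf_{r→0} log μ(B(x,r)) / log r, provided x lies in the topological support of μ. -/
open Filter MeasureTheory Set Metric Topology

noncomputable section

/-- The pointwise Hölder exponent of F at x:
Hol(F,x) = sup{α > 0 : limsup_{y→x} |F(y)−F(x)|/|y−x|^α < ∞}. -/
def holderExponent (F : ℝ → ℝ) (x : ℝ) : ℝ :=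
  sSup {α : ℝ | 0 < α ∧ ∃ C : ℝ, ∀ᶠ y in 𝓝[≠] x, |F y - F x| ≤ C * |y - x| ^ α}

/-! The increment |F(y) − F(x)| is the mass of the interval between x and y, which lies in
B(x, 2|y − x|), while B(x, r) is covered by the intervals from x to x ± r. Hence
|F(y) − F(x)| ≲ |y − x|^α and μ(B(x, r)) ≲ r^α imply each other, up to a constant that any
smaller exponent absorbs. Since log r < 0, `a ≤ log μ(B(x,r)) / log r` says `μ(B(x,r)) ≤ r^a`,
so both sides are suprema of essentially the same exponents; at exponents `≤ 0`, atomlessness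
gives μ(B(x, r)) → 0, making the liminf `≥ 0` like the Hölder exponent. -/

open scoped Interval

-- Also covers the unbounded case, where both sides are `0` by the convention for `Real.sSup`.
theorem sSup_eq_sSup_of_forall_Iio_subset {S T : Set ℝ} (hS : ∀ α ∈ S, 0 ≤ α) (h0 : 0 ∈ T)
    (hTS : ∀ a ∈ T, 0 < a → a ∈ S) (hST : ∀ α ∈ S, Iio α ⊆ T) : sSup S = sSup T := by
  by_cases hb : BddAbove S
  · obtain ⟨M, hM⟩ := id hb
    have hbT : BddAbove T := by
      refine ⟨max M 0, fun a ha => ?_⟩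
      rcases le_or_gt a 0 with ha0 | ha0
      · exact ha0.trans (le_max_right _ _)
      · exact (hM (hTS a ha ha0)).trans (le_max_left _ _)
    refine le_antisymm (Real.sSup_le (fun α hα => ?_) (le_csSup hbT h0)) ?_
    · calc α = sSup (Iio α) := csSup_Iio.symm
        _ ≤ sSup T := csSup_le_csSup hbT nonempty_Iio (hST α hα)
    · refine csSup_le ⟨0, h0⟩ fun a ha => ?_
      rcases le_or_gt a 0 with ha0 | ha0
      · exact ha0.trans (Real.sSup_nonneg hS)
      · exact le_csSup hb (hTS a ha ha0)
  · have hbT : ¬BddAbove T := fun ⟨M, hM⟩ =>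
      hb ⟨M, fun α hα => Iio_subset_Iic_iff.1 ((hST α hα).trans hM)⟩
    rw [Real.sSup_of_not_bddAbove hb, Real.sSup_of_not_bddAbove hbT]

theorem le_log_div_log_iff {m r a : ℝ} (hm : 0 < m) (hr₀ : 0 < r) (hr₁ : r < 1) :
    a ≤ Real.log m / Real.log r ↔ m ≤ r ^ a := by
  rw [le_div_iff_of_neg (Real.log_neg hr₀ hr₁), ← Real.log_rpow hr₀,
    Real.log_le_log_iff hm (Real.rpow_pos_of_pos hr₀ a)]

theorem liminf_log_div_log_eq_sSup {m : ℝ → ℝ} (hm : ∀ r > 0, 0 < m r) :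
    liminf (fun r => Real.log (m r) / Real.log r) (𝓝[>] 0) =
      sSup {a | ∀ᶠ r in 𝓝[>] 0, m r ≤ r ^ a} := by
  rw [liminf_eq]
  congr 1
  ext a
  exact eventually_congr <| by
    filter_upwards [Ioo_mem_nhdsGT (zero_lt_one (α := ℝ))] with r hr
    exact le_log_div_log_iff (a := a) (hm r hr.1) hr.1 hr.2

theorem eventually_le_rpow_of_eventually_le_mul_rpow {m : ℝ → ℝ} {K α a : ℝ} (ha : a < α)
    (h : ∀ᶠ r in 𝓝[>] 0, m r ≤ K * r ^ α) : ∀ᶠ r in 𝓝[>] 0, m r ≤ r ^ a := by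
  filter_upwards [h, (tendsto_rpow_neg_nhdsGT_zero (sub_neg.2 ha)).eventually_ge_atTop K,
    self_mem_nhdsWithin] with r hr hK hr₀
  calc m r ≤ K * r ^ α := hr
    _ ≤ r ^ (a - α) * r ^ α := mul_le_mul_of_nonneg_right hK (Real.rpow_nonneg (le_of_lt hr₀) α)
    _ = r ^ a := by rw [← Real.rpow_add hr₀, sub_add_cancel]

theorem uIoc_subset_ball_two_mul_abs_sub (x y : ℝ) : Ι x y ⊆ ball x (2 * |y - x|) := by
  intro z hz
  rw [mem_ball, Real.dist_eq, abs_lt]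
  rcases mem_uIoc.1 hz with ⟨h₁, h₂⟩ | ⟨h₁, h₂⟩ <;> constructor <;>
    cases abs_cases (y - x) <;> linarith

theorem ball_subset_uIoc_union_uIoc (x r : ℝ) : ball x r ⊆ Ι x (x - r) ∪ Ι x (x + r) := by
  intro z hz
  rw [Real.ball_eq_Ioo] at hz
  rcases le_or_gt z x with hzx | hzx
  · exact Or.inl (mem_uIoc.2 (Or.inr ⟨hz.1, hzx⟩))
  · exact Or.inr (mem_uIoc.2 (Or.inl ⟨hzx, hz.2.le⟩))

section FiniteMeasure

variable (μ : Measure ℝ) [IsFiniteMeasure μ] (x : ℝ)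

theorem abs_measureReal_Iic_sub_Iic (y : ℝ) :
    |μ.real (Iic y) - μ.real (Iic x)| = μ.real (Ι x y) := by
  have hIoc (a b : ℝ) (h : a ≤ b) : μ.real (Iic b) - μ.real (Iic a) = μ.real (Ioc a b) := by
    rw [← Iic_union_Ioc_eq_Iic h, measureReal_union (Iic_disjoint_Ioc le_rfl) measurableSet_Ioc,
      add_sub_cancel_left]
  rcases le_total x y with h | h
  · rw [uIoc_of_le h, hIoc x y h, abs_of_nonneg measureReal_nonneg]
  · rw [uIoc_of_ge h, abs_sub_comm, hIoc y x h, abs_of_nonneg measureReal_nonneg]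

theorem measureReal_ball_le_abs_add_abs (r : ℝ) :
    μ.real (ball x r) ≤
      |μ.real (Iic (x - r)) - μ.real (Iic x)| + |μ.real (Iic (x + r)) - μ.real (Iic x)| := by
  rw [abs_measureReal_Iic_sub_Iic, abs_measureReal_Iic_sub_Iic]
  exact (measureReal_mono (ball_subset_uIoc_union_uIoc x r)).trans (measureReal_union_le _ _)

theorem eventually_abs_measureReal_Iic_sub_le_of_eventually_measureReal_ball_le {a : ℝ}
    (h : ∀ᶠ r in 𝓝[>] 0, μ.real (ball x r) ≤ r ^ a) :
    ∀ᶠ y in 𝓝[≠] x, |μ.real (Iic y) - μ.real (Iic x)| ≤ 2 ^ a * |y - x| ^ a := by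
  have hlim : Tendsto (fun y => 2 * |y - x|) (𝓝[≠] x) (𝓝[>] 0) := by
    refine tendsto_nhdsWithin_iff.2 ⟨?_, ?_⟩
    · refine ((continuous_const.mul (continuous_id.sub continuous_const).abs).tendsto' x 0
        (by simp)).mono_left nhdsWithin_le_nhds
    · filter_upwards [self_mem_nhdsWithin] with y hy
      exact mul_pos two_pos (abs_pos.2 (sub_ne_zero.2 hy))
  filter_upwards [hlim.eventually h] with y hy
  rw [abs_measureReal_Iic_sub_Iic, ← Real.mul_rpow zero_le_two (abs_nonneg _)]
  exact (measureReal_mono (uIoc_subset_ball_two_mul_abs_sub x y)).trans hy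

theorem eventually_measureReal_ball_le_of_eventually_abs_measureReal_Iic_sub_le {α C : ℝ}
    (h : ∀ᶠ y in 𝓝[≠] x, |μ.real (Iic y) - μ.real (Iic x)| ≤ C * |y - x| ^ α) :
    ∀ᶠ r in 𝓝[>] 0, μ.real (ball x r) ≤ 2 * C * r ^ α := by
  have hlim : ∀ s : ℝ, s ≠ 0 → Tendsto (fun r => x + s * r) (𝓝[>] 0) (𝓝[≠] x) := by
    intro s hs
    refine tendsto_nhdsWithin_iff.2 ⟨?_, ?_⟩
    · exact ((continuous_const.add (continuous_const.mul continuous_id)).tendsto' 0 x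
        (by simp)).mono_left nhdsWithin_le_nhds
    · filter_upwards [self_mem_nhdsWithin] with r hr
      simpa [hs] using (mem_Ioi.1 hr).ne'
  filter_upwards [(hlim (-1) (by norm_num)).eventually h, (hlim 1 one_ne_zero).eventually h,
    self_mem_nhdsWithin] with r hleft hright hr
  simp only [neg_one_mul, one_mul, ← sub_eq_add_neg, sub_sub_cancel_left, add_sub_cancel_left,
    abs_neg, abs_of_pos (mem_Ioi.1 hr)] at hleft hright
  linarith [measureReal_ball_le_abs_add_abs μ x r]

theorem tendsto_measureReal_ball_nhdsGT_zero [NullSingletonClass μ] :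
    Tendsto (fun r => μ.real (ball x r)) (𝓝[>] 0) (𝓝 0) := by
  have h := tendsto_measure_biInter_gt (μ := μ) (s := ball x) (a := 0)
    (fun r _ => measurableSet_ball.nullMeasurableSet) (fun _ _ _ hij => ball_subset_ball hij)
    ⟨1, one_pos, measure_ne_top μ _⟩
  rw [biInter_gt_ball, closedBall_zero, measure_singleton] at h
  exact (ENNReal.tendsto_toReal ENNReal.zero_ne_top).comp h

end FiniteMeasure

/-- For a finite atomless Borel measure μ on ℝ and x in its support, the pointwise
Hölder exponent of the distribution function F_μ(x) = μ((−∞,x]) at x equals the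
lower local dimension liminf_{r→0} log μ(B(x,r))/log r. -/
theorem holderExponent_distribution_eq_lower_local_dim
    (μ : Measure ℝ) [IsFiniteMeasure μ] [NullSingletonClass μ] (x : ℝ)
    (hx : ∀ r : ℝ, 0 < r → 0 < μ (Metric.ball x r)) :
    holderExponent (fun y => (μ (Set.Iic y)).toReal) x =
      Filter.liminf
        (fun r : ℝ => Real.log (μ (Metric.ball x r)).toReal / Real.log r)
        (𝓝[>] (0 : ℝ)) := by
  refine (sSup_eq_sSup_of_forall_Iio_subset
    (T := {a | ∀ᶠ r in 𝓝[>] 0, μ.real (ball x r) ≤ r ^ a}) ?_ ?_ ?_ ?_).trans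
    (liminf_log_div_log_eq_sSup fun r hr => ?_).symm
  · exact fun α hα => hα.1.le
  · simpa using (tendsto_measureReal_ball_nhdsGT_zero μ x).eventually (ge_mem_nhds one_pos)
  · exact fun a ha ha₀ =>
      ⟨ha₀, _, eventually_abs_measureReal_Iic_sub_le_of_eventually_measureReal_ball_le μ x ha⟩
  · rintro α ⟨-, C, hC⟩ a ha
    exact eventually_le_rpow_of_eventually_le_mul_rpow ha
      (eventually_measureReal_ball_le_of_eventually_abs_measureReal_Iic_sub_le μ x hC)
  · exact ENNReal.toReal_pos (hx r hr).ne' (measure_ne_top μ _)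
end
end

section
/- Let φ, ψ : Iℕ → ℝ be Hölder continuous on the full shift with φ < 0, and define t(β) by P(t(β)φ + βψ) = 0. Fix β > 0, η > 0, α ∈ ℝ, ε > 0, and set b = t(β) + β(α+ε) + η. Then the sum over the collection C_{α+ε} = {τ ∈ I* : S_{|τ|}ψ(τ̄)/S_{|τ|}φ(τ̄) ≤ α+ε} of exp(b · S_{|τ|}φ(τ̄)) is finite. -/
open Filter MeasureTheory Set Metric Topology

noncomputable section

def shift {I : Type*} (ω : ℕ → I) : ℕ → I := fun n => ω (n + 1)

def birk {I : Type*} (f : (ℕ → I) → ℝ) (n : ℕ) (ω : ℕ → I) : ℝ :=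
  ∑ k ∈ Finset.range n, f (shift^[k] ω)

def cylW {I : Type*} (γ : List I) : Set (ℕ → I) :=
  {ω | ∀ k, ∀ h : k < γ.length, ω k = γ.get ⟨k, h⟩}

def cylN {I : Type*} (ω : ℕ → I) (n : ℕ) : Set (ℕ → I) := {ω' | ∀ k < n, ω' k = ω k}

def per {I : Type*} [Inhabited I] (γ : List I) : ℕ → I := fun n => γ.getD (n % γ.length) default

def pressure {I : Type*} [Fintype I] (f : (ℕ → I) → ℝ) : ℝ :=
  Filter.limsup
    (fun n => Real.log (∑ w : Fin n → I, Real.exp (sSup (birk f n '' cylW (List.ofFn w)))) / n)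
    Filter.atTop

def HolderPotential {I : Type*} (f : (ℕ → I) → ℝ) : Prop :=
  ∃ C r : ℝ, 0 < C ∧ 0 < r ∧ r < 1 ∧
    ∀ (n : ℕ) (ω ω' : ℕ → I), (∀ k < n, ω k = ω' k) → |f ω - f ω'| ≤ C * r ^ n

lemma holder_bdd {I : Type*} [Inhabited I] {f : (ℕ → I) → ℝ} (h : HolderPotential f) :
    ∃ B : ℝ, 0 ≤ B ∧ ∀ ω, |f ω| ≤ B := by
  obtain ⟨C, r, hC, _, _, hf⟩ := h
  refine ⟨|f (fun _ => default)| + C, by positivity, fun ω => ?_⟩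
  have := hf 0 ω (fun _ => default) (by omega)
  simp only [pow_zero, mul_one] at this
  have := abs_sub_abs_le_abs_sub (f ω) (f (fun _ => default))
  linarith [abs_nonneg (f ω)]

lemma per_mem_cylW {I : Type*} [Inhabited I] (γ : List I) : per γ ∈ cylW γ := by
  intro k h
  show γ.getD (k % γ.length) default = _
  rw [Nat.mod_eq_of_lt h, List.getD_eq_getElem γ default h, List.get_eq_getElem]

lemma birk_abs_le {I : Type*} {f : (ℕ → I) → ℝ} {B : ℝ} (hB : ∀ ω, |f ω| ≤ B)
    (n : ℕ) (ω : ℕ → I) : |birk f n ω| ≤ n * B := by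
  calc |birk f n ω| ≤ ∑ k ∈ Finset.range n, |f (shift^[k] ω)| := Finset.abs_sum_le_sum_abs _ _
    _ ≤ ∑ k ∈ Finset.range n, B := Finset.sum_le_sum fun k _ => hB _
    _ = n * B := by simp [mul_comm]

lemma birk_le_sSup {I : Type*} [Inhabited I] {f : (ℕ → I) → ℝ} {B : ℝ} (hB : ∀ ω, |f ω| ≤ B)
    (γ : List I) : birk f γ.length (per γ) ≤ sSup (birk f γ.length '' cylW γ) := by
  apply le_csSup
  · exact ⟨γ.length * B, fun x ⟨ω, _, hx⟩ => hx ▸ (abs_le.1 (birk_abs_le hB _ ω)).2⟩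
  · exact ⟨per γ, per_mem_cylW γ, rfl⟩

lemma birk_comb {I : Type*} (φ ψ : (ℕ → I) → ℝ) (a b : ℝ) (n : ℕ) (ω : ℕ → I) :
    birk (fun ω => a * φ ω + b * ψ ω) n ω = a * birk φ n ω + b * birk ψ n ω := by
  simp [birk, Finset.mul_sum, Finset.sum_add_distrib]

-- uniform negativity via discrete topology compactness
lemma holder_continuous {I : Type*} [TopologicalSpace I] [DiscreteTopology I]
    {f : (ℕ → I) → ℝ} (h : HolderPotential f) : Continuous f := by
  obtain ⟨C, r, hC, hr0, hr1, hf⟩ := h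
  rw [continuous_iff_continuousAt]
  intro ω
  rw [ContinuousAt, Metric.tendsto_nhds]
  intro δ hδ
  obtain ⟨n, hn⟩ := exists_pow_lt_of_lt_one (by positivity : (0:ℝ) < δ / C) hr1
  have hUopen : IsOpen {ω' : ℕ → I | ∀ k < n, ω' k = ω k} := by
    have : {ω' : ℕ → I | ∀ k < n, ω' k = ω k} =
        ⋂ k ∈ Finset.range n, (fun ω' : ℕ → I => ω' k) ⁻¹' {ω k} := by
      ext ω'; simp [Set.mem_iInter]
    rw [this]
    exact isOpen_biInter_finset fun k _ => (continuous_apply k).isOpen_preimage _ (isOpen_discrete _)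
  filter_upwards [hUopen.mem_nhds (fun k _ => rfl)] with ω' hω'
  have := hf n ω' ω hω'
  have : C * r ^ n < δ := by
    rw [lt_div_iff₀ hC] at hn; linarith [hn]
  rw [Real.dist_eq]
  calc |f ω' - f ω| ≤ C * r ^ n := hf n ω' ω hω'
    _ < δ := this

lemma holder_neg_bound {I : Type*} [Fintype I] [Inhabited I] {f : (ℕ → I) → ℝ}
    (hH : HolderPotential f) (hneg : ∀ ω, f ω < 0) : ∃ m : ℝ, 0 < m ∧ ∀ ω, f ω ≤ -m := by
  letI : TopologicalSpace I := ⊥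
  haveI : DiscreteTopology I := ⟨rfl⟩
  have hc : Continuous f := holder_continuous hH
  obtain ⟨ω₀, -, hω₀⟩ := isCompact_univ.exists_isMaxOn ⟨fun _ => default, trivial⟩
    hc.continuousOn
  refine ⟨-f ω₀, by linarith [hneg ω₀], fun ω => ?_⟩
  have h1 : f ω ≤ f ω₀ := hω₀ (mem_univ ω)
  linarith

lemma holder_comb {I : Type*} {φ ψ : (ℕ → I) → ℝ} (hφ : HolderPotential φ)
    (hψ : HolderPotential ψ) (a b : ℝ) :
    HolderPotential (fun ω => a * φ ω + b * ψ ω) := by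
  obtain ⟨C₁, r₁, hC₁, hr₁0, hr₁1, h₁⟩ := hφ
  obtain ⟨C₂, r₂, hC₂, hr₂0, hr₂1, h₂⟩ := hψ
  refine ⟨|a| * C₁ + |b| * C₂ + 1, max r₁ r₂, by positivity, lt_max_of_lt_left hr₁0,
    max_lt hr₁1 hr₂1, fun n ω ω' h => ?_⟩
  have e1 : |a * φ ω + b * ψ ω - (a * φ ω' + b * ψ ω')|
      ≤ |a| * |φ ω - φ ω'| + |b| * |ψ ω - ψ ω'| := by
    calc _ = |a * (φ ω - φ ω') + b * (ψ ω - ψ ω')| := by ring_nf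
      _ ≤ |a * (φ ω - φ ω')| + |b * (ψ ω - ψ ω')| := abs_add_le _ _
      _ = |a| * |φ ω - φ ω'| + |b| * |ψ ω - ψ ω'| := by rw [abs_mul, abs_mul]
  have p1 : r₁ ^ n ≤ max r₁ r₂ ^ n := pow_le_pow_left₀ hr₁0.le (le_max_left _ _) n
  have p2 : r₂ ^ n ≤ max r₁ r₂ ^ n := pow_le_pow_left₀ hr₂0.le (le_max_right _ _) n
  have pn : (0:ℝ) ≤ max r₁ r₂ ^ n := by positivity
  have b1 := mul_le_mul_of_nonneg_left (h₁ n ω ω' h) (abs_nonneg a)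
  have b2 := mul_le_mul_of_nonneg_left (h₂ n ω ω' h) (abs_nonneg b)
  nlinarith [mul_le_mul_of_nonneg_left p1 (by positivity : (0:ℝ) ≤ |a| * C₁),
    mul_le_mul_of_nonneg_left p2 (by positivity : (0:ℝ) ≤ |b| * C₂), abs_nonneg a, abs_nonneg b]

lemma birk_le_neg {I : Type*} {φ : (ℕ → I) → ℝ} {m : ℝ} (hφm : ∀ ω, φ ω ≤ -m)
    (n : ℕ) (ω : ℕ → I) : birk φ n ω ≤ n * (-m) := by
  calc birk φ n ω ≤ ∑ _k ∈ Finset.range n, (-m) := Finset.sum_le_sum fun k _ => hφm _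
    _ = n * (-m) := by simp [mul_comm]

lemma summable_main {I : Type*} [Fintype I] [Inhabited I]
    (f φ : (ℕ → I) → ℝ) (hfH : HolderPotential f) {m η : ℝ}
    (hm : 0 < m) (hφm : ∀ ω, φ ω ≤ -m) (hη : 0 < η)
    (hp : pressure f = 0) :
    Summable (fun τ : List I =>
      Real.exp (birk f τ.length (per τ) + η * birk φ τ.length (per τ))) := by
  obtain ⟨B, hB0, hB⟩ := holder_bdd hfH
  set Z : ℕ → ℝ := fun n => ∑ w : Fin n → I, Real.exp (sSup (birk f n '' cylW (List.ofFn w)))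
    with hZdef
  set c : ℝ := η * m / 2 with hc
  have hc0 : 0 < c := by positivity
  have hcard : 0 < Fintype.card I := Fintype.card_pos
  have hZpos : ∀ n, 0 < Z n := fun n =>
    Finset.sum_pos (fun w _ => Real.exp_pos _) ⟨fun _ => default, Finset.mem_univ _⟩
  have hsSup : ∀ n (w : Fin n → I), sSup (birk f n '' cylW (List.ofFn w)) ≤ n * B := by
    intro n w
    refine Real.sSup_le ?_ (by positivity)
    rintro x ⟨ω, -, rfl⟩
    exact (abs_le.1 (birk_abs_le hB n ω)).2
  -- boundedness of log Z n / n
  have hbdd : IsBoundedUnder (· ≤ ·) atTop (fun n : ℕ => Real.log (Z n) / n) := by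
    refine isBoundedUnder_of ⟨max 0 (Real.log (Fintype.card I) + B), fun n => ?_⟩
    rcases Nat.eq_zero_or_pos n with h | h
    · simp [h]
    · have h1 : Z n ≤ (Fintype.card I : ℝ) ^ n * Real.exp (n * B) := by
        calc Z n ≤ ∑ _w : Fin n → I, Real.exp (n * B) :=
            Finset.sum_le_sum fun w _ => Real.exp_le_exp.2 (hsSup n w)
          _ = (Fintype.card I : ℝ) ^ n * Real.exp (n * B) := by
            simp [Fintype.card_fun]
      have h2 : Real.log (Z n) ≤ n * Real.log (Fintype.card I) + n * B := by
        calc Real.log (Z n) ≤ Real.log ((Fintype.card I : ℝ) ^ n * Real.exp (n * B)) :=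
            Real.log_le_log (hZpos n) h1
          _ = n * Real.log (Fintype.card I) + n * B := by
            rw [Real.log_mul (by positivity) (Real.exp_pos _).ne', Real.log_pow, Real.log_exp]
      have hn0 : (0:ℝ) < n := by exact_mod_cast h
      refine le_trans ?_ (le_max_right _ _)
      rw [div_le_iff₀ hn0]
      calc Real.log (Z n) ≤ n * Real.log (Fintype.card I) + n * B := h2
        _ = (Real.log (Fintype.card I) + B) * n := by ring
  have hev : ∀ᶠ n : ℕ in atTop, Real.log (Z n) / n < c := by
    apply eventually_lt_of_limsup_lt _ hbdd
    rw [show Filter.limsup (fun n : ℕ => Real.log (Z n) / n) atTop = pressure f from rfl, hp]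
    exact hc0
  obtain ⟨N, hN⟩ := eventually_atTop.1 hev
  set M : ℕ := max N 1 with hM
  -- the fiber sums
  set a : ℕ → ℝ := fun n => ∑ w : Fin n → I,
    Real.exp (birk f n (per (List.ofFn w)) + η * birk φ n (per (List.ofFn w))) with hadef
  have ha_le : ∀ n ≥ M, a n ≤ Real.exp (-c * n) := by
    intro n hn
    have hn1 : 1 ≤ n := le_trans (le_max_right N 1) hn
    have hnN : N ≤ n := le_trans (le_max_left N 1) hn
    have hn0 : (0:ℝ) < n := by exact_mod_cast hn1
    have hZn : Z n ≤ Real.exp (c * n) := by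
      have := hN n hnN
      rw [div_lt_iff₀ hn0] at this
      have := Real.exp_le_exp.2 this.le
      rwa [Real.exp_log (hZpos n)] at this
    have step : a n ≤ Z n * Real.exp (η * (n * (-m))) := by
      rw [hadef, hZdef, Finset.sum_mul]
      refine Finset.sum_le_sum fun w _ => ?_
      rw [← Real.exp_add]
      apply Real.exp_le_exp.2
      have h1 : birk f n (per (List.ofFn w)) ≤ sSup (birk f n '' cylW (List.ofFn w)) := by
        have := birk_le_sSup hB (List.ofFn w)
        rwa [List.length_ofFn] at this
      have h2 : birk φ n (per (List.ofFn w)) ≤ n * (-m) := birk_le_neg hφm n _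
      nlinarith [mul_le_mul_of_nonneg_left h2 hη.le]
    calc a n ≤ Z n * Real.exp (η * (n * (-m))) := step
      _ ≤ Real.exp (c * n) * Real.exp (η * (n * (-m))) := by
          apply mul_le_mul_of_nonneg_right hZn (Real.exp_pos _).le
      _ = Real.exp (-c * n) := by
          rw [← Real.exp_add]; congr 1; rw [hc]; ring
  have ha_nonneg : ∀ n, 0 ≤ a n := fun n =>
    Finset.sum_nonneg fun w _ => (Real.exp_pos _).le
  have ha_sum : Summable a := by
    rw [← summable_nat_add_iff M]
    refine Summable.of_nonneg_of_le (fun n => ha_nonneg _) (fun n => ?_)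
      (((summable_geometric_of_lt_one (Real.exp_pos (-c)).le
        (Real.exp_lt_one_iff.2 (by linarith))).mul_left (Real.exp (-c) ^ M)))
    calc a (n + M) ≤ Real.exp (-c * (n + M : ℕ)) := ha_le _ (by omega)
      _ = Real.exp (-c) ^ (n + M) := by
          rw [mul_comm, Real.exp_nat_mul]
      _ = Real.exp (-c) ^ M * Real.exp (-c) ^ n := by rw [pow_add, mul_comm]
  -- sigma summability
  have hsig : Summable (fun p : Σ n : ℕ, Fin n → I =>
      Real.exp (birk f p.1 (per (List.ofFn p.2)) + η * birk φ p.1 (per (List.ofFn p.2)))) := by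
    rw [summable_sigma_of_nonneg (fun _ => (Real.exp_pos _).le)]
    exact ⟨fun n => Summable.of_finite, by simpa [tsum_fintype] using ha_sum⟩
  have := (List.equivSigmaTuple (α := I)).summable_iff.mpr hsig
  refine this.congr fun τ => ?_
  simp [Function.comp, List.equivSigmaTuple, List.ofFn_get]

/-- The sum over C_{α+ε} = {τ : S_{|τ|}ψ(τ̄)/S_{|τ|}φ(τ̄) ≤ α+ε} of
exp((t(β)+β(α+ε)+η)·S_{|τ|}φ(τ̄)) is finite, where P(t(β)φ+βψ) = 0. -/
theorem summable_over_good_words {I : Type*} [Fintype I] [Inhabited I]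
    (φ ψ : (ℕ → I) → ℝ) (hφH : HolderPotential φ) (hψH : HolderPotential ψ)
    (hφneg : ∀ ω, φ ω < 0)
    (β η α ε tβ : ℝ) (hβ : 0 < β) (hη : 0 < η) (hε : 0 < ε)
    (htβ : pressure (fun ω => tβ * φ ω + β * ψ ω) = 0) :
    Summable (fun τ : {τ : List I // τ ≠ [] ∧
        birk ψ τ.length (per τ) / birk φ τ.length (per τ) ≤ α + ε} =>
      Real.exp ((tβ + β * (α + ε) + η) * birk φ τ.1.length (per τ.1))) := by
  set f : (ℕ → I) → ℝ := fun ω => tβ * φ ω + β * ψ ω with hfdef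
  have hfH : HolderPotential f := holder_comb hφH hψH tβ β
  obtain ⟨m, hm, hφm⟩ := holder_neg_bound hφH hφneg
  have hg : Summable (fun τ : List I =>
      Real.exp (birk f τ.length (per τ) + η * birk φ τ.length (per τ))) :=
    summable_main f φ hfH hm hφm hη htβ
  have hsub := hg.subtype {τ : List I | τ ≠ [] ∧
    birk ψ τ.length (per τ) / birk φ τ.length (per τ) ≤ α + ε}
  refine Summable.of_nonneg_of_le (fun τ => (Real.exp_pos _).le) (fun τ => ?_) hsub
  obtain ⟨τ, hτne, hτle⟩ := τ
  simp only [Function.comp]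
  rw [Real.exp_le_exp]
  set Sφ := birk φ τ.length (per τ) with hSφ
  set Sψ := birk ψ τ.length (per τ) with hSψ
  have hlen : 0 < τ.length := List.length_pos_iff.2 hτne
  have hSφneg : Sφ < 0 := by
    apply Finset.sum_neg (fun k _ => hφneg _)
    exact Finset.nonempty_range_iff.2 (by omega)
  have hmul : (α + ε) * Sφ ≤ Sψ := (div_le_iff_of_neg hSφneg).1 hτle
  have hcomb : birk f τ.length (per τ) = tβ * Sφ + β * Sψ := birk_comb φ ψ tβ β _ _
  rw [hcomb]
  nlinarith [mul_le_mul_of_nonneg_left hmul hβ.le]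
end
end

section
/- Under the hypotheses of the previous statement, the conjugacy Θ = π_g ∘ π_f^{−1} : Λ → [0,1] coincides with the distribution function of the measure μ := μ_{φ_g} ∘ π_f^{−1}, i.e. Θ(x) = μ((−∞, x]) for all x ∈ Λ, where μ_{φ_g} is the Gibbs measure of the geometric potential φ_g := −log g' ∘ π_g and λ = μ_{φ_g} ∘ π_g^{−1} is Lebesgue measure on [0,1]. -/
open Filter MeasureTheory Set Metric Topology

noncomputable section

/-- A full expanding C^{1+ε} branch on J: the branch maps J onto [0,1], is
differentiable with derivative > 1, and the derivative is Hölder continuous. -/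
def FullBranchExpanding (g : ℝ → ℝ) (J : Set ℝ) : Prop :=
  g '' J = Set.Icc 0 1 ∧ DifferentiableOn ℝ g J ∧
    (∀ x ∈ J, 1 < derivWithin g J x) ∧
    ∃ ε C : ℝ, 0 < ε ∧ 0 < C ∧ ∀ x ∈ J, ∀ y ∈ J,
      |derivWithin g J x - derivWithin g J y| ≤ C * |x - y| ^ ε

/-- An expanding piecewise C^{1+ε} interval map with s full branches on
J_i = [u i, v i] ⊆ [0,1] (in increasing order), together with its coding map π. -/
structure ExpandingSystem (s : ℕ) where
  u : Fin s → ℝ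
  v : Fin s → ℝ
  huv : ∀ i, u i < v i
  hsub : ∀ i, Set.Icc (u i) (v i) ⊆ Set.Icc (0 : ℝ) 1
  horder : ∀ i j : Fin s, i < j → v i ≤ u j
  br : Fin s → ℝ → ℝ
  hbr : ∀ i, FullBranchExpanding (br i) (Set.Icc (u i) (v i))
  π : (ℕ → Fin s) → ℝ
  hπmem : ∀ ω : ℕ → Fin s, π ω ∈ Set.Icc (u (ω 0)) (v (ω 0))
  hπconj : ∀ ω : ℕ → Fin s, br (ω 0) (π ω) = π (shift ω)

/-- The geometric potential φ_g = −log g' ∘ π_g of an expanding system. -/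
def expGeomPot {s : ℕ} (G : ExpandingSystem s) : (ℕ → Fin s) → ℝ :=
  fun ω => -Real.log (derivWithin (G.br (ω 0)) (Set.Icc (G.u (ω 0)) (G.v (ω 0))) (G.π ω))

/-- Gibbs measure in the sense of Bowen for a potential with zero pressure:
a shift-invariant probability measure whose cylinder measures are comparable
to exp(S_nψ). -/
def IsGibbsZero {I : Type*} [MeasurableSpace I] (μ : Measure (ℕ → I))
    (ψ : (ℕ → I) → ℝ) : Prop :=
  μ Set.univ = 1 ∧ (∀ A : Set (ℕ → I), μ (shift ⁻¹' A) = μ A) ∧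
    ∃ C : ℝ, 1 ≤ C ∧ ∀ (ω : ℕ → I) (n : ℕ),
      ENNReal.ofReal (C⁻¹ * Real.exp (birk ψ n ω)) ≤ μ (cylN ω n) ∧
      μ (cylN ω n) ≤ ENNReal.ofReal (C * Real.exp (birk ψ n ω))

/-! Both coding maps are monotone for the lexicographic order on `ℕ → Fin s`, so the sets
`π_f⁻¹ (-∞, π_f ω]` and `π_g⁻¹ (-∞, π_g ω]` differ only inside the fibres `π_f⁻¹ {π_f ω}` and
`π_g⁻¹ {π_g ω}`. The `π_g`-fibres are null because their images are points for Lebesgue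
measure; in particular every point is null. A `π_f`-fibre is countable: two codings of the
same point first differ at some letter, after which one of them codes `0` or `1`, and such a
coding is constant. Hence `μ (-∞, π_f ω] = λ [0, π_g ω] = π_g ω`. -/

theorem Monotone.le_or_eq_of_le {α β γ : Type*} [LinearOrder α] [Preorder β] [PartialOrder γ]
    {φ : α → β} {ψ : α → γ} (hφ : Monotone φ) (hψ : Monotone ψ) {a b : α} (h : ψ b ≤ ψ a) :
    φ b ≤ φ a ∨ ψ b = ψ a := by
  rcases le_total b a with hba | hab
  · exact Or.inl (hφ hba)
  · exact Or.inr (h.antisymm (hψ hab))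

theorem countable_setOf_eventually_const {α : Type*} [Countable α] :
    {ω : ℕ → α | ∃ k, ∀ j ≥ k, ω j = ω k}.Countable := by
  rw [ofPred_exists]
  refine countable_iUnion fun k => ?_
  refine (mapsTo_univ (fun ω (i : Fin (k + 1)) => ω i) _).countable_of_injOn ?_ countable_univ
  intro ω hω ω' hω' h
  funext j
  rcases le_or_gt j k with hj | hj
  · exact congrFun h ⟨j, by omega⟩
  · rw [hω j hj.le, hω' j hj.le]
    exact congrFun h ⟨k, by omega⟩

theorem ae_eq_of_subset_union_of_measure_zero {α : Type*} [MeasurableSpace α] {μ : Measure α}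
    {s t n₁ n₂ : Set α} (h₁ : s ⊆ t ∪ n₁) (h₂ : t ⊆ s ∪ n₂) (hn₁ : μ n₁ = 0) (hn₂ : μ n₂ = 0) :
    s =ᵐ[μ] t :=
  (ae_le_set.2 (measure_mono_null (sdiff_subset_iff.2 h₁) hn₁)).antisymm
    (ae_le_set.2 (measure_mono_null (sdiff_subset_iff.2 h₂) hn₂))

theorem volume_restrict_Icc_Iic_toReal {y : ℝ} (hy : y ∈ Icc (0 : ℝ) 1) :
    (volume.restrict (Icc (0 : ℝ) 1) (Iic y)).toReal = y := by
  have hset : Iic y ∩ Icc 0 1 = Icc 0 y := by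
    ext z
    simp only [mem_inter_iff, mem_Iic, mem_Icc]
    constructor
    · rintro ⟨hzy, h0, -⟩; exact ⟨h0, hzy⟩
    · rintro ⟨h0, hzy⟩; exact ⟨hzy, h0, hzy.trans hy.2⟩
  rw [Measure.restrict_apply measurableSet_Iic, hset, Real.volume_Icc, sub_zero,
    ENNReal.toReal_ofReal hy.1]

theorem shift_iterate_apply {I : Type*} (ω : ℕ → I) (m n : ℕ) :
    (shift^[m] ω) n = ω (n + m) := by
  induction m generalizing ω n with
  | zero => rfl
  | succ m ih => rw [Function.iterate_succ_apply, ih]; rfl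

namespace ExpandingSystem

variable {s : ℕ} (E : ExpandingSystem s)

theorem u_strictMono : StrictMono E.u := fun i j hij =>
  (E.huv i).trans_le (E.horder i j hij)

theorem v_strictMono : StrictMono E.v := fun i j hij =>
  (E.horder i j hij).trans_lt (E.huv j)

theorem u_nonneg (i : Fin s) : 0 ≤ E.u i :=
  (E.hsub i (left_mem_Icc.mpr (E.huv i).le)).1

theorem v_le_one (i : Fin s) : E.v i ≤ 1 :=
  (E.hsub i (right_mem_Icc.mpr (E.huv i).le)).2

theorem br_strictMonoOn (i : Fin s) : StrictMonoOn (E.br i) (Icc (E.u i) (E.v i)) := by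
  obtain ⟨-, hdiff, hderiv, -⟩ := E.hbr i
  refine strictMonoOn_of_deriv_pos (convex_Icc _ _) hdiff.continuousOn fun x hx => ?_
  rw [interior_Icc] at hx
  rw [← derivWithin_of_mem_nhds (Icc_mem_nhds hx.1 hx.2)]
  exact one_pos.trans (hderiv x (Ioo_subset_Icc_self hx))

theorem br_u (i : Fin s) : E.br i (E.u i) = 0 :=
  ((E.br_strictMonoOn i).monotoneOn.map_isLeast (isLeast_Icc (E.huv i).le)).unique
    ((E.hbr i).1 ▸ isLeast_Icc zero_le_one)

theorem br_v (i : Fin s) : E.br i (E.v i) = 1 :=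
  ((E.br_strictMonoOn i).monotoneOn.map_isGreatest (isGreatest_Icc (E.huv i).le)).unique
    ((E.hbr i).1 ▸ isGreatest_Icc zero_le_one)

theorem π_shift (ω : ℕ → Fin s) : E.π (shift ω) = E.br (ω 0) (E.π ω) := (E.hπconj ω).symm

theorem π_le_π_of_lt (k : ℕ) :
    ∀ ω ω' : ℕ → Fin s, (∀ j < k, ω j = ω' j) → ω k < ω' k → E.π ω ≤ E.π ω' := by
  induction k with
  | zero =>
    intro ω ω' _ hlt
    exact (E.hπmem ω).2.trans ((E.horder _ _ hlt).trans (E.hπmem ω').1)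
  | succ k ih =>
    intro ω ω' hagree hlt
    have h0 : ω 0 = ω' 0 := hagree 0 k.succ_pos
    have hshift : E.π (shift ω) ≤ E.π (shift ω') :=
      ih _ _ (fun j hj => hagree (j + 1) (by omega)) hlt
    rw [E.π_shift, E.π_shift, ← h0] at hshift
    exact ((E.br_strictMonoOn (ω 0)).le_iff_le (E.hπmem ω) (h0 ▸ E.hπmem ω')).mp hshift

theorem monotone_π_ofLex : Monotone (E.π ∘ ofLex : Lex (ℕ → Fin s) → ℝ) := by
  intro a b hab
  rcases hab.lt_or_eq with ⟨k, hagree, hlt⟩ | rfl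
  · exact E.π_le_π_of_lt k _ _ hagree hlt
  · rfl

theorem π_shift_iterate_succ_eq_one_and_eq_zero (k : ℕ) :
    ∀ ω ω' : ℕ → Fin s, (∀ j < k, ω j = ω' j) → ω k < ω' k → E.π ω = E.π ω' →
      E.π (shift^[k + 1] ω) = 1 ∧ E.π (shift^[k + 1] ω') = 0 := by
  induction k with
  | zero =>
    intro ω ω' _ hlt heq
    have hv : E.π ω = E.v (ω 0) :=
      (E.hπmem ω).2.antisymm (heq ▸ (E.horder _ _ hlt).trans (E.hπmem ω').1)
    have hu : E.π ω' = E.u (ω' 0) :=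
      (E.hπmem ω').1.antisymm' (heq ▸ (E.hπmem ω).2.trans (E.horder _ _ hlt))
    exact ⟨by rw [Function.iterate_one, π_shift, hv, br_v],
      by rw [Function.iterate_one, π_shift, hu, br_u]⟩
  | succ k ih =>
    intro ω ω' hagree hlt heq
    refine ih (shift ω) (shift ω') (fun j hj => hagree (j + 1) (by omega)) hlt ?_
    rw [π_shift, π_shift, heq, hagree 0 k.succ_pos]

theorem u_eq_zero_of_π_eq_zero (n : ℕ) : ∀ τ : ℕ → Fin s, E.π τ = 0 → E.u (τ n) = 0 := by
  have hu0 : ∀ τ : ℕ → Fin s, E.π τ = 0 → E.u (τ 0) = 0 := fun τ h =>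
    (h ▸ (E.hπmem τ).1).antisymm (E.u_nonneg _)
  induction n with
  | zero => exact hu0
  | succ n ih =>
    intro τ h
    refine ih (shift τ) ?_
    have hbr := E.br_u (τ 0)
    rw [hu0 τ h] at hbr
    rwa [π_shift, h]

theorem v_eq_one_of_π_eq_one (n : ℕ) : ∀ τ : ℕ → Fin s, E.π τ = 1 → E.v (τ n) = 1 := by
  have hv1 : ∀ τ : ℕ → Fin s, E.π τ = 1 → E.v (τ 0) = 1 := fun τ h =>
    (E.v_le_one _).antisymm (h ▸ (E.hπmem τ).2)
  induction n with
  | zero => exact hv1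
  | succ n ih =>
    intro τ h
    refine ih (shift τ) ?_
    have hbr := E.br_v (τ 0)
    rw [hv1 τ h] at hbr
    rwa [π_shift, h]

theorem const_of_π_eq_zero_or_eq_one {τ : ℕ → Fin s} (h : E.π τ = 0 ∨ E.π τ = 1) (n : ℕ) :
    τ n = τ 0 := by
  rcases h with h | h
  · exact E.u_strictMono.injective ((E.u_eq_zero_of_π_eq_zero n τ h).trans
      (E.u_eq_zero_of_π_eq_zero 0 τ h).symm)
  · exact E.v_strictMono.injective ((E.v_eq_one_of_π_eq_one n τ h).trans
      (E.v_eq_one_of_π_eq_one 0 τ h).symm)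

theorem eventually_const_of_π_eq_π {ω ω' : ℕ → Fin s} (heq : E.π ω = E.π ω') (hne : ω ≠ ω') :
    ∃ k, ∀ j ≥ k, ω' j = ω' k := by
  obtain ⟨k, hk⟩ : ∃ k, E.π (shift^[k] ω') = 0 ∨ E.π (shift^[k] ω') = 1 := by
    rcases lt_or_gt_of_ne (toLex_inj.not.mpr hne) with ⟨k, hagree, hlt⟩ | ⟨k, hagree, hlt⟩
    · exact ⟨k + 1, Or.inl (E.π_shift_iterate_succ_eq_one_and_eq_zero k _ _ hagree hlt heq).2⟩
    · exact ⟨k + 1, Or.inr (E.π_shift_iterate_succ_eq_one_and_eq_zero k _ _ hagree hlt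
        heq.symm).1⟩
  refine ⟨k, fun j hj => ?_⟩
  obtain ⟨n, rfl⟩ := Nat.exists_eq_add_of_le' hj
  simpa [shift_iterate_apply] using E.const_of_π_eq_zero_or_eq_one hk n

theorem countable_preimage_π_singleton (ω : ℕ → Fin s) : (E.π ⁻¹' {E.π ω}).Countable := by
  refine (countable_setOf_eventually_const.insert ω).mono fun ω' hω' => ?_
  rcases eq_or_ne ω ω' with rfl | hne
  · exact mem_insert _ _
  · exact mem_insert_of_mem _ (E.eventually_const_of_π_eq_π hω'.symm hne)

theorem preimage_Iic_π_subset (E' : ExpandingSystem s) (ω : ℕ → Fin s) :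
    E.π ⁻¹' Iic (E.π ω) ⊆ E'.π ⁻¹' Iic (E'.π ω) ∪ E.π ⁻¹' {E.π ω} := fun _ h =>
  E'.monotone_π_ofLex.le_or_eq_of_le E.monotone_π_ofLex h

end ExpandingSystem

theorem conjugacy_eq_distribution_function_general (s : ℕ)
    (F G : ExpandingSystem s)
    (μg : Measure (ℕ → Fin s))
    (hπg : Measurable G.π) (hπf : Measurable F.π)
    (hLeb : μg.map G.π = volume.restrict (Set.Icc (0 : ℝ) 1))
    (Θ : ℝ → ℝ) (hΘ : ∀ ω : ℕ → Fin s, Θ (F.π ω) = G.π ω) :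
    ∀ x ∈ F.π '' Set.univ, Θ x = ((μg.map F.π) (Set.Iic x)).toReal := by
  rintro x ⟨ω, -, rfl⟩
  have hG : ∀ t, μg (G.π ⁻¹' {t}) = 0 := fun t => by
    rw [← Measure.map_apply hπg (measurableSet_singleton t), hLeb, measure_singleton]
  have : NullSingletonClass μg :=
    ⟨fun τ => measure_mono_null (fun _ h => congrArg G.π h) (hG (G.π τ))⟩
  have hF : μg (F.π ⁻¹' {F.π ω}) = 0 := (F.countable_preimage_π_singleton ω).measure_zero μg
  have hae : F.π ⁻¹' Iic (F.π ω) =ᵐ[μg] G.π ⁻¹' Iic (G.π ω) :=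
    ae_eq_of_subset_union_of_measure_zero (F.preimage_Iic_π_subset G ω)
      (G.preimage_Iic_π_subset F ω) hF (hG _)
  rw [hΘ, Measure.map_apply hπf measurableSet_Iic, measure_congr hae,
    ← Measure.map_apply hπg measurableSet_Iic, hLeb,
    volume_restrict_Icc_Iic_toReal (G.hsub (ω 0) (G.hπmem ω))]

/-- The conjugacy Θ = π_g ∘ π_f⁻¹ coincides with the distribution function of
μ = μ_{φ_g} ∘ π_f⁻¹, where μ_{φ_g} is the Gibbs measure of the geometric potential
φ_g and μ_{φ_g} ∘ π_g⁻¹ is Lebesgue measure on [0,1]. -/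
theorem conjugacy_eq_distribution_function (s : ℕ) (hs : 2 ≤ s)
    (F G : ExpandingSystem s) (hGrange : G.π '' Set.univ = Set.Icc (0 : ℝ) 1)
    (μg : Measure (ℕ → Fin s)) (hGibbs : IsGibbsZero μg (expGeomPot G))
    (hπg : Measurable G.π) (hπf : Measurable F.π)
    (hLeb : μg.map G.π = volume.restrict (Set.Icc (0 : ℝ) 1))
    (Θ : ℝ → ℝ) (hΘ : ∀ ω : ℕ → Fin s, Θ (F.π ω) = G.π ω) :
    ∀ x ∈ F.π '' Set.univ, Θ x = ((μg.map F.π) (Set.Iic x)).toReal :=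
  conjugacy_eq_distribution_function_general s F G μg hπg hπf hLeb Θ hΘ
end
end
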